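/- arXiv:1605.08094 — 4 statements merged into one kernel-verified Lean document; each statement's English description precedes it below -/
import Mathlib

section
/- Let x₁,x₂,y,z ∈ Λ₀ and ξ₁⁺,ξ₂⁺,ξ₁⁻,ξ₂⁻ ∈ Λ₁ with x₂ invertible, satisfying ξ₂⁺ = −(y/x₂)ξ₁⁻, ξ₁⁺ = (y/x₂)ξ₂⁻, z = ξ₁⁻ξ₂⁻/(2x₂). Then for every odd α ∈ Λ₁ the U_α-transformed tuple (x₁−αξ₂⁺, x₂, y+αξ₁⁻/2, z−αξ₁⁻/2 | ξ₁⁺+(y+z)α, ξ₂⁺, ξ₁⁻, ξ₂⁻+x₂α) satisfies the same three relations, and for every odd β ∈ Λ₁ the V_β-transformed tuple (x₁−βξ₁⁺, x₂, y−βξ₂⁻/2, z−βξ₂⁻/2 | ξ₁⁺, ξ₂⁺+(y−z)β, ξ₁⁻−x₂β, ξ₂⁻) also satisfies the same three relations. -/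
/- STATEMENT 3: the special-light-cone relations (x₂-branch) are preserved by the
coordinate actions of U_α and V_β. -/

noncomputable section

variable {V : Type*} [AddCommGroup V] [Module ℝ V]

/-- Membership in the even part Λ₀ of the Grassmann algebra. -/
def IsEven (x : ExteriorAlgebra ℝ V) : Prop :=
  x ∈ CliffordAlgebra.evenOdd (0 : QuadraticForm ℝ V) 0

/-- Membership in the odd part Λ₁ of the Grassmann algebra. -/
def IsOdd (x : ExteriorAlgebra ℝ V) : Prop :=
  x ∈ CliffordAlgebra.evenOdd (0 : QuadraticForm ℝ V) 1

local notation "ιv" => CliffordAlgebra.ι (0 : QuadraticForm ℝ V)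

lemma iota_swap (m n : V) : ιv m * ιv n = -(ιv n * ιv m) := by
  have h := ExteriorAlgebra.ι_add_mul_swap (R := ℝ) m n
  exact eq_neg_of_add_eq_zero_left h

lemma iota_comm_even (m : V) {b : ExteriorAlgebra ℝ V} (hb : IsEven b) :
    ιv m * b = b * ιv m := by
  induction b, hb using CliffordAlgebra.even_induction with
  | algebraMap r => exact (Algebra.commutes r _).symm
  | add x y hx hy ihx ihy => rw [mul_add, add_mul, ihx, ihy]
  | ι_mul_ι_mul m₁ m₂ x hx ih =>
      calc ιv m * (ιv m₁ * ιv m₂ * x)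
          = (ιv m * ιv m₁) * ιv m₂ * x := by noncomm_ring
        _ = -(ιv m₁ * ιv m) * ιv m₂ * x := by rw [iota_swap]
        _ = -(ιv m₁ * ((ιv m * ιv m₂) * x)) := by noncomm_ring
        _ = -(ιv m₁ * (-(ιv m₂ * ιv m) * x)) := by rw [iota_swap]
        _ = ιv m₁ * ιv m₂ * (ιv m * x) := by noncomm_ring
        _ = ιv m₁ * ιv m₂ * (x * ιv m) := by rw [ih]
        _ = ιv m₁ * ιv m₂ * x * ιv m := by noncomm_ring

lemma iota_anticomm_odd (m : V) {b : ExteriorAlgebra ℝ V} (hb : IsOdd b) :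
    ιv m * b = -(b * ιv m) := by
  induction b, hb using CliffordAlgebra.odd_induction with
  | ι v => exact iota_swap m v
  | add x y hx hy ihx ihy => rw [mul_add, add_mul, ihx, ihy, neg_add]
  | ι_mul_ι_mul m₁ m₂ x hx ih =>
      calc ιv m * (ιv m₁ * ιv m₂ * x)
          = (ιv m * ιv m₁) * ιv m₂ * x := by noncomm_ring
        _ = -(ιv m₁ * ιv m) * ιv m₂ * x := by rw [iota_swap]
        _ = -(ιv m₁ * ((ιv m * ιv m₂) * x)) := by noncomm_ring
        _ = -(ιv m₁ * (-(ιv m₂ * ιv m) * x)) := by rw [iota_swap]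
        _ = ιv m₁ * ιv m₂ * (ιv m * x) := by noncomm_ring
        _ = ιv m₁ * ιv m₂ * -(x * ιv m) := by rw [ih]
        _ = -(ιv m₁ * ιv m₂ * x * ιv m) := by noncomm_ring

lemma even_comm {a : ExteriorAlgebra ℝ V} (ha : IsEven a) (b : ExteriorAlgebra ℝ V) :
    a * b = b * a := by
  induction b using CliffordAlgebra.induction with
  | algebraMap r => exact Algebra.commutes r a |>.symm
  | ι m => exact (iota_comm_even m ha).symm
  | mul x y ihx ihy => rw [← mul_assoc, ihx, mul_assoc, ihy, ← mul_assoc]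
  | add x y ihx ihy => rw [mul_add, add_mul, ihx, ihy]

lemma odd_anticomm {a b : ExteriorAlgebra ℝ V} (ha : IsOdd a) (hb : IsOdd b) :
    a * b = -(b * a) := by
  induction b, hb using CliffordAlgebra.odd_induction with
  | ι v => rw [eq_comm, neg_eq_iff_eq_neg, iota_anticomm_odd v ha]
  | add x y hx hy ihx ihy => rw [mul_add, add_mul, ihx, ihy, neg_add]
  | ι_mul_ι_mul m₁ m₂ x hx ih =>
      have he : IsEven (ιv m₁ * ιv m₂) := CliffordAlgebra.ι_mul_ι_mem_evenOdd_zero _ m₁ m₂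
      calc a * (ιv m₁ * ιv m₂ * x) = (a * (ιv m₁ * ιv m₂)) * x := (mul_assoc _ _ _).symm
        _ = (ιv m₁ * ιv m₂) * (a * x) := by rw [← even_comm he a, mul_assoc]
        _ = (ιv m₁ * ιv m₂) * -(x * a) := by rw [ih]
        _ = -(ιv m₁ * ιv m₂ * x * a) := by noncomm_ring

lemma odd_sq {a : ExteriorAlgebra ℝ V} (ha : IsOdd a) : a * a = 0 := by
  have h := odd_anticomm ha ha
  have : a * a + a * a = 0 := eq_neg_iff_add_eq_zero.mp h
  have h2 : (2 : ℝ) • (a * a) = 0 := by rw [two_smul]; exact this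
  simpa using (smul_eq_zero.mp h2).resolve_left (by norm_num)

lemma comm_push {A : Type*} [Semiring A] {a b : A} (h : a * b = b * a) (t : A) :
    a * (b * t) = b * (a * t) := by rw [← mul_assoc, h, mul_assoc]

lemma acomm_push {A : Type*} [Ring A] {a b : A} (h : a * b = -(b * a)) (t : A) :
    a * (b * t) = -(b * (a * t)) := by rw [← mul_assoc, h, neg_mul, mul_assoc]

lemma sq_push {A : Type*} [Semiring A] {a : A} (h : a * a = 0) (t : A) :
    a * (a * t) = 0 := by rw [← mul_assoc, h, zero_mul]

lemma inv_push {A : Type*} [Semiring A] {a b : A} (h : a * b = 1) (t : A) :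
    a * (b * t) = t := by rw [← mul_assoc, h, one_mul]

/-- The special light cone relations (x₂-branch), with `x₂i` the inverse of `x₂`:
ξ₂⁺ = −(y/x₂)ξ₁⁻, ξ₁⁺ = (y/x₂)ξ₂⁻, z = ξ₁⁻ξ₂⁻/(2x₂).  (The relations do not
involve the x₁-coordinate.) -/
def SlcRel (x₂i y z ξ₁p ξ₂p ξ₁m ξ₂m : ExteriorAlgebra ℝ V) : Prop :=
  ξ₂p = -(y * x₂i * ξ₁m) ∧ ξ₁p = y * x₂i * ξ₂m ∧
    z = (1/2 : ℝ) • (x₂i * (ξ₁m * ξ₂m))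

set_option maxHeartbeats 1000000 in
theorem stmt3
    (x₁ x₂ y z x₂i ξ₁p ξ₂p ξ₁m ξ₂m : ExteriorAlgebra ℝ V)
    (hx₁ : IsEven x₁) (hx₂ : IsEven x₂) (hy : IsEven y) (hz : IsEven z)
    (hx₂i : IsEven x₂i)
    (hξ₁p : IsOdd ξ₁p) (hξ₂p : IsOdd ξ₂p) (hξ₁m : IsOdd ξ₁m) (hξ₂m : IsOdd ξ₂m)
    (hinv : x₂ * x₂i = 1) (hinv' : x₂i * x₂ = 1)
    (hrel : SlcRel x₂i y z ξ₁p ξ₂p ξ₁m ξ₂m) :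
    -- the U_α-transformed tuple (x₁−αξ₂⁺, x₂, y+αξ₁⁻/2, z−αξ₁⁻/2 |
    --   ξ₁⁺+(y+z)α, ξ₂⁺, ξ₁⁻, ξ₂⁻+x₂α) satisfies the same relations
    (∀ α : ExteriorAlgebra ℝ V, IsOdd α →
      SlcRel x₂i (y + (1/2 : ℝ) • (α * ξ₁m)) (z - (1/2 : ℝ) • (α * ξ₁m))
        (ξ₁p + (y + z) * α) ξ₂p ξ₁m (ξ₂m + x₂ * α)) ∧
    -- the V_β-transformed tuple (x₁−βξ₁⁺, x₂, y−βξ₂⁻/2, z−βξ₂⁻/2 |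
    --   ξ₁⁺, ξ₂⁺+(y−z)β, ξ₁⁻−x₂β, ξ₂⁻) satisfies the same relations
    (∀ β : ExteriorAlgebra ℝ V, IsOdd β →
      SlcRel x₂i (y - (1/2 : ℝ) • (β * ξ₂m)) (z - (1/2 : ℝ) • (β * ξ₂m))
        ξ₁p (ξ₂p + (y - z) * β) (ξ₁m - x₂ * β) ξ₂m) := by
  obtain ⟨h1, h2, h3⟩ := hrel
  subst h1; subst h2; subst h3
  have s1 := odd_sq hξ₁m
  have s2 := odd_sq hξ₂m
  have c21 : ξ₂m * ξ₁m = -(ξ₁m * ξ₂m) := odd_anticomm hξ₂m hξ₁m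
  have c1i : ξ₁m * x₂i = x₂i * ξ₁m := (even_comm hx₂i ξ₁m).symm
  have c2i : ξ₂m * x₂i = x₂i * ξ₂m := (even_comm hx₂i ξ₂m).symm
  have c1x : ξ₁m * x₂ = x₂ * ξ₁m := (even_comm hx₂ ξ₁m).symm
  have c2x : ξ₂m * x₂ = x₂ * ξ₂m := (even_comm hx₂ ξ₂m).symm
  have c1y : ξ₁m * y = y * ξ₁m := (even_comm hy ξ₁m).symm
  have c2y : ξ₂m * y = y * ξ₂m := (even_comm hy ξ₂m).symm
  have cxi : x₂ * x₂i = 1 := hinv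
  have cix : x₂i * x₂ = 1 := hinv'
  have ciy : x₂i * y = y * x₂i := even_comm hx₂i y
  have cxy : x₂ * y = y * x₂ := even_comm hx₂ y
  constructor
  · intro α hα
    have sα := odd_sq hα
    have a1 : α * ξ₁m = -(ξ₁m * α) := odd_anticomm hα hξ₁m
    have a2 : α * ξ₂m = -(ξ₂m * α) := odd_anticomm hα hξ₂m
    have ai : α * x₂i = x₂i * α := (even_comm hx₂i α).symm
    have ax : α * x₂ = x₂ * α := (even_comm hx₂ α).symm
    have ay : α * y = y * α := (even_comm hy α).symm
    refine ⟨?_, ?_, ?_⟩ <;>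
    · simp only [sub_eq_add_neg, mul_add, add_mul, mul_assoc, smul_mul_assoc,
        mul_smul_comm, smul_add, smul_neg, neg_mul, mul_neg, neg_neg, neg_add,
        acomm_push a1, acomm_push a2,
        comm_push ai, comm_push ax, comm_push ay, ai, ax, ay, a1, a2,
        comm_push c1i, comm_push c2i, comm_push c1x, comm_push c2x,
        comm_push c1y, comm_push c2y, c1i, c2i, c1x, c2x, c1y, c2y,
        acomm_push c21, c21, comm_push ciy, comm_push cxy, ciy, cxy,
        inv_push cxi, inv_push cix, cxi, cix,
        sq_push s1, sq_push s2, sq_push sα, s1, s2, sα,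
        mul_zero, zero_mul, smul_zero, add_zero, zero_add, mul_one, one_mul]
      try module
  · intro β hβ
    have sβ := odd_sq hβ
    have b1 : β * ξ₁m = -(ξ₁m * β) := odd_anticomm hβ hξ₁m
    have b2 : β * ξ₂m = -(ξ₂m * β) := odd_anticomm hβ hξ₂m
    have bi : β * x₂i = x₂i * β := (even_comm hx₂i β).symm
    have bx : β * x₂ = x₂ * β := (even_comm hx₂ β).symm
    have by' : β * y = y * β := (even_comm hy β).symm
    refine ⟨?_, ?_, ?_⟩ <;>
    · simp only [sub_eq_add_neg, mul_add, add_mul, mul_assoc, smul_mul_assoc,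
        mul_smul_comm, smul_add, smul_neg, neg_mul, mul_neg, neg_neg, neg_add,
        acomm_push b1, acomm_push b2,
        comm_push bi, comm_push bx, comm_push by', bi, bx, by', b1, b2,
        comm_push c1i, comm_push c2i, comm_push c1x, comm_push c2x,
        comm_push c1y, comm_push c2y, c1i, c2i, c1x, c2x, c1y, c2y,
        acomm_push c21, c21, comm_push ciy, comm_push cxy, ciy, cxy,
        inv_push cxi, inv_push cix, cxi, cix,
        sq_push s1, sq_push s2, sq_push sβ, s1, s2, sβ,
        mul_zero, zero_mul, smul_zero, add_zero, zero_add, mul_one, one_mul]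
      try module
end
end

section
/- Let x₁,x₂,y,z ∈ Λ₀ with x₁ and y invertible and y² = x₁x₂, let ξ₁⁺,ξ₂⁺,ξ₁⁻,ξ₂⁻ ∈ Λ₁ satisfy ξ₁⁻ = (y/x₁)ξ₂⁺, ξ₂⁻ = −(y/x₁)ξ₁⁺, z = ξ₁⁺ξ₂⁺/(2x₁) (the special light cone relations for the point with coordinates (x₁,x₂,−y,z|ξ₁⁺,ξ₂⁺,ξ₁⁻,ξ₂⁻)), and let a ∈ Λ₀ be invertible with a²x₁ = y. Define σ₁ := a⁻¹ξ₂⁻/y and σ₂ := −a⁻¹ξ₁⁻/y. Then applying the D_a-action followed by the J-action to the tuple (x₁,x₂,−y,z|ξ₁⁺,ξ₂⁺,ξ₁⁻,ξ₂⁻) yields exactly the standard-position tuple y·(1,1,1,σ₁σ₂/2 | σ₁, σ₂, −σ₂, σ₁); moreover σ₁ = −aξ₁⁺/y and σ₂ = −aξ₂⁺/y. -/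
/- STATEMENT 9 (Proposition 5.2 of the paper): bringing the triple into standard
position: applying the D_a-action followed by the J-action to a special light cone
point (x₁,x₂,−y,z|ξ₁⁺,ξ₂⁺,ξ₁⁻,ξ₂⁻) yields y·(1,1,1,σ₁σ₂/2|σ₁,σ₂,−σ₂,σ₁). -/

noncomputable section

variable {V : Type*} [AddCommGroup V] [Module ℝ V]

/-- A coordinate tuple (x₁,x₂,y,z | ξ₁⁺,ξ₂⁺,ξ₁⁻,ξ₂⁻) in superspace ℝ^{2,2|4}. -/
structure STuple (V : Type*) [AddCommGroup V] [Module ℝ V] where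
  x₁ : ExteriorAlgebra ℝ V
  x₂ : ExteriorAlgebra ℝ V
  y : ExteriorAlgebra ℝ V
  z : ExteriorAlgebra ℝ V
  ξ₁p : ExteriorAlgebra ℝ V
  ξ₂p : ExteriorAlgebra ℝ V
  ξ₁m : ExteriorAlgebra ℝ V
  ξ₂m : ExteriorAlgebra ℝ V

/-- Componentwise scalar multiplication of a coordinate tuple. -/
def tsmul (c : ExteriorAlgebra ℝ V) (T : STuple V) : STuple V :=
  ⟨c * T.x₁, c * T.x₂, c * T.y, c * T.z, c * T.ξ₁p, c * T.ξ₂p, c * T.ξ₁m, c * T.ξ₂m⟩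

/-- The coordinate action of `D_a` (with `ai` the inverse of `a`):
(x₁,x₂,y,z|ξ₁⁺,ξ₂⁺,ξ₁⁻,ξ₂⁻) ↦ (a²x₁, a⁻²x₂, y, z | aξ₁⁺, aξ₂⁺, a⁻¹ξ₁⁻, a⁻¹ξ₂⁻). -/
def Dact (a ai : ExteriorAlgebra ℝ V) (T : STuple V) : STuple V :=
  ⟨a * a * T.x₁, ai * ai * T.x₂, T.y, T.z,
    a * T.ξ₁p, a * T.ξ₂p, ai * T.ξ₁m, ai * T.ξ₂m⟩

/-- The coordinate action of `J`:
(x₁,x₂,y,z|ξ₁⁺,ξ₂⁺,ξ₁⁻,ξ₂⁻) ↦ (x₂, x₁, −y, z | ξ₂⁻, −ξ₁⁻, ξ₂⁺, −ξ₁⁺). -/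
def Jact (T : STuple V) : STuple V :=
  ⟨T.x₂, T.x₁, -T.y, T.z, T.ξ₂m, -T.ξ₁m, T.ξ₂p, -T.ξ₁p⟩

lemma pair_central (m₁ m₂ : V) (t : ExteriorAlgebra ℝ V) :
    Commute (ExteriorAlgebra.ι ℝ m₁ * ExteriorAlgebra.ι ℝ m₂) t := by
  have h : ∀ a b : V, ExteriorAlgebra.ι ℝ a * ExteriorAlgebra.ι ℝ b
      = -(ExteriorAlgebra.ι ℝ b * ExteriorAlgebra.ι ℝ a) := fun a b =>
    eq_neg_of_add_eq_zero_left (ExteriorAlgebra.ι_add_mul_swap a b)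
  induction t using CliffordAlgebra.induction with
  | algebraMap r => exact (Algebra.commutes r _).symm
  | ι v =>
    show _ * ExteriorAlgebra.ι ℝ v = ExteriorAlgebra.ι ℝ v * _
    rw [mul_assoc, h m₂ v, mul_neg, ← mul_assoc, h m₁ v, neg_mul, neg_neg, mul_assoc]
  | mul x y hx hy => exact hx.mul_right hy
  | add x y hx hy => exact hx.add_right hy

lemma central_inv {u ui : ExteriorAlgebra ℝ V} (hc : ∀ t, Commute u t)
    (h1 : u * ui = 1) (h2 : ui * u = 1) (t : ExteriorAlgebra ℝ V) : Commute ui t := by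
  show ui * t = t * ui
  calc ui * t = ui * (t * (u * ui)) := by rw [h1, mul_one]
    _ = ui * ((u * t) * ui) := by rw [← mul_assoc t u ui, ← (hc t).eq]
    _ = (ui * u) * (t * ui) := by simp only [mul_assoc]
    _ = t * ui := by rw [h2, one_mul]

lemma even_central {x : ExteriorAlgebra ℝ V} (hx : IsEven x) (t : ExteriorAlgebra ℝ V) :
    Commute x t := by
  have hx' : x ∈ CliffordAlgebra.evenOdd (0 : QuadraticForm ℝ V) 0 := hx
  exact CliffordAlgebra.even_induction (Q := (0 : QuadraticForm ℝ V))
    (motive := fun u _ => Commute u t)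
    (algebraMap := fun r => Algebra.commutes r t)
    (add := fun u v hu hv ihu ihv => ihu.add_left ihv)
    (ι_mul_ι_mul := fun m₁ m₂ u hu ihu => (pair_central m₁ m₂ t).mul_left ihu) x hx'

theorem stmt9
    (x₁ x₂ y z x₁i yi a ai : ExteriorAlgebra ℝ V)
    (ξ₁p ξ₂p ξ₁m ξ₂m σ₁ σ₂ : ExteriorAlgebra ℝ V)
    (hx₁ : IsEven x₁) (hx₂ : IsEven x₂) (hy : IsEven y) (hz : IsEven z)
    (ha : IsEven a)
    (hξ₁p : IsOdd ξ₁p) (hξ₂p : IsOdd ξ₂p) (hξ₁m : IsOdd ξ₁m) (hξ₂m : IsOdd ξ₂m)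
    (hx₁inv : x₁ * x₁i = 1) (hx₁inv' : x₁i * x₁ = 1)
    (hyinv : y * yi = 1) (hyinv' : yi * y = 1)
    (hainv : a * ai = 1) (hainv' : ai * a = 1)
    (hy2 : y ^ 2 = x₁ * x₂)
    -- special light cone relations for the point (x₁,x₂,−y,z|ξ₁⁺,ξ₂⁺,ξ₁⁻,ξ₂⁻)
    (hr1 : ξ₁m = y * x₁i * ξ₂p) (hr2 : ξ₂m = -(y * x₁i * ξ₁p))
    (hr3 : z = (1/2 : ℝ) • (x₁i * (ξ₁p * ξ₂p)))
    -- a² x₁ = y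
    (hax : a * a * x₁ = y)
    -- σ₁ := a⁻¹ξ₂⁻/y and σ₂ := −a⁻¹ξ₁⁻/y
    (hσ₁ : σ₁ = yi * ai * ξ₂m) (hσ₂ : σ₂ = -(yi * ai * ξ₁m)) :
    Jact (Dact a ai ⟨x₁, x₂, -y, z, ξ₁p, ξ₂p, ξ₁m, ξ₂m⟩) =
      tsmul y ⟨1, 1, 1, (1/2 : ℝ) • (σ₁ * σ₂), σ₁, σ₂, -σ₂, σ₁⟩ ∧
    σ₁ = -(yi * a * ξ₁p) ∧ σ₂ = -(yi * a * ξ₂p) := by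
  have ca := even_central ha
  have cy := even_central hy
  have cx₁ := even_central hx₁
  have cai := central_inv ca hainv hainv'
  have cyi := central_inv cy hyinv hyinv'
  -- key : yi * ai * (y * x₁i) = yi * a
  have key : yi * ai * (y * x₁i) = yi * a := by
    rw [← hax]
    simp only [mul_assoc, hx₁inv, mul_one]
    rw [← mul_assoc ai a, hainv', one_mul]
  -- the two claims
  have c1 : σ₁ = -(yi * a * ξ₁p) := by
    rw [hσ₁, hr2, mul_neg, ← mul_assoc (yi * ai) (y * x₁i) ξ₁p, key]
  have c2 : σ₂ = -(yi * a * ξ₂p) := by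
    rw [hσ₂, hr1, ← mul_assoc (yi * ai) (y * x₁i) ξ₂p, key]
  -- a * a = y * x₁i
  have haa : a * a = y * x₁i := by
    rw [← hax, mul_assoc (a * a) x₁ x₁i, hx₁inv, mul_one]
  -- x₂ = a * (a * y)
  have hx₂' : x₂ = a * (a * y) := by
    have e : x₁ * x₂ = x₁ * (a * (a * y)) := by
      rw [← hy2, sq]
      nth_rewrite 1 [← hax]
      rw [((ca x₁).mul_left (ca x₁)).eq, mul_assoc x₁ (a * a) y, mul_assoc a a y]
    calc x₂ = x₁i * (x₁ * x₂) := by rw [← mul_assoc, hx₁inv', one_mul]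
      _ = x₁i * (x₁ * (a * (a * y))) := by rw [e]
      _ = a * (a * y) := by rw [← mul_assoc, hx₁inv', one_mul]
  refine ⟨?_, c1, c2⟩
  simp only [Jact, Dact, tsmul, STuple.mk.injEq]
  refine ⟨?_, ?_, ?_, ?_, ?_, ?_, ?_, ?_⟩
  · -- ai * ai * x₂ = y * 1
    rw [hx₂', mul_one]
    simp only [mul_assoc]
    rw [← mul_assoc ai a, hainv', one_mul, ← mul_assoc, hainv', one_mul]
  · rw [hax, mul_one]
  · rw [neg_neg, mul_one]
  · -- z = y * ((1/2) • (σ₁ * σ₂))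
    rw [hr3, c1, c2, neg_mul_neg, mul_smul_comm]
    congr 1
    symm
    have cw : Commute (yi * a) ξ₁p := (cyi ξ₁p).mul_left (ca ξ₁p)
    calc y * ((yi * a) * ξ₁p * ((yi * a) * ξ₂p))
        = y * ((yi * a) * ((yi * a) * (ξ₁p * ξ₂p))) := by
          rw [mul_assoc (yi * a) ξ₁p, ← mul_assoc ξ₁p (yi * a) ξ₂p, ← cw.eq,
            mul_assoc (yi * a) ξ₁p ξ₂p]
      _ = (y * yi) * ((a * yi) * (a * (ξ₁p * ξ₂p))) := by
          simp only [mul_assoc]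
      _ = (yi * (a * a)) * (ξ₁p * ξ₂p) := by
          rw [hyinv, one_mul, ← (cyi a).eq]
          simp only [mul_assoc]
      _ = x₁i * (ξ₁p * ξ₂p) := by
          rw [haa, ← mul_assoc yi y x₁i, hyinv', one_mul]
  · -- ai * ξ₂m = y * σ₁
    rw [hσ₁, ← mul_assoc, ← mul_assoc, hyinv, one_mul]
  · -- -(ai * ξ₁m) = y * σ₂
    rw [hσ₂, mul_neg, ← mul_assoc, ← mul_assoc, hyinv, one_mul]
  · -- a * ξ₂p = y * -σ₂
    rw [c2, neg_neg, ← mul_assoc, ← mul_assoc, hyinv, one_mul]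
  · -- -(a * ξ₁p) = y * σ₁
    rw [c1, mul_neg, ← mul_assoc, ← mul_assoc, hyinv, one_mul]
end
end

section
/- For a > 0 let L(a) := [[−a, −a⁻¹],[0, −a⁻¹]] and R(a) := [[a, 0],[a, a⁻¹]] be real 2×2 matrices. Then for every n ≥ 1, every choice of positive reals a₁,…,a_n and every choice, for each i, of the factor Mᵢ ∈ {L(aᵢ), R(aᵢ)}, the product M := M₁M₂⋯M_n satisfies: every entry of (−1)^k·M is nonnegative and both diagonal entries of (−1)^k·M are strictly positive, where k is the number of indices i with Mᵢ of type L. In particular the trace of M is nonzero and its sign equals (−1)^k. -/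
/-!
Multiplying each left turn by `-1` makes every factor a matrix with nonnegative entries and
positive diagonal. Such matrices form a multiplicative monoid, since `(AB)ᵢᵢ ≥ AᵢᵢBᵢᵢ`, so the
product of the signed factors, which is `(-1)^k` times the original product, lies in it as well.
-/

noncomputable section

/-- The left-turn matrix L(a). -/
def Lmat (a : ℝ) : Matrix (Fin 2) (Fin 2) ℝ := !![-a, -a⁻¹; 0, -a⁻¹]

/-- The right-turn matrix R(a). -/
def Rmat (a : ℝ) : Matrix (Fin 2) (Fin 2) ℝ := !![a, 0; a, a⁻¹]

theorem List.prod_ofFn_smul {M N : Type*} [CommMonoid M] [Monoid N] [MulAction M N]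
    [IsScalarTower M N N] [SMulCommClass M N N] {n : ℕ} (r : Fin n → M) (f : Fin n → N) :
    (List.ofFn fun i => r i • f i).prod = (∏ i, r i) • (List.ofFn f).prod := by
  induction n with
  | zero => simp
  | succ n ih => simp [List.ofFn_succ, Fin.prod_univ_succ, ih, smul_mul_smul_comm]

namespace Matrix

variable {n R : Type*} [Fintype n] [DecidableEq n]
  [Semiring R] [PartialOrder R] [IsStrictOrderedRing R]

variable (n R) in
def nonnegPosDiag : Submonoid (Matrix n n R) where
  carrier := {A | (∀ i j, 0 ≤ A i j) ∧ ∀ i, 0 < A i i}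
  one_mem' := ⟨fun i j => by by_cases h : i = j <;> simp [one_apply, h], fun i => by simp⟩
  mul_mem' := by
    rintro A B ⟨hA, hA_diag⟩ ⟨hB, hB_diag⟩
    refine ⟨fun i j => Finset.sum_nonneg fun l _ => mul_nonneg (hA i l) (hB l j), fun i => ?_⟩
    calc 0 < A i i * B i i := mul_pos (hA_diag i) (hB_diag i)
      _ ≤ ∑ l, A i l * B l i :=
        Finset.single_le_sum (fun l _ => mul_nonneg (hA i l) (hB l i)) (Finset.mem_univ i)

theorem trace_pos_of_mem_nonnegPosDiag [Nonempty n] {A : Matrix n n R}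
    (hA : A ∈ nonnegPosDiag n R) : 0 < A.trace :=
  Finset.sum_pos (fun i _ => hA.2 i) Finset.univ_nonempty

end Matrix

open Matrix

theorem neg_Lmat_mem_nonnegPosDiag {a : ℝ} (ha : 0 < a) : -Lmat a ∈ nonnegPosDiag (Fin 2) ℝ := by
  have ha' : 0 < a⁻¹ := inv_pos.mpr ha
  refine ⟨fun i j => ?_, fun i => ?_⟩ <;> fin_cases i <;> try fin_cases j
  all_goals simp [Lmat]; try positivity

theorem Rmat_mem_nonnegPosDiag {a : ℝ} (ha : 0 < a) : Rmat a ∈ nonnegPosDiag (Fin 2) ℝ := by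
  have ha' : 0 < a⁻¹ := inv_pos.mpr ha
  refine ⟨fun i j => ?_, fun i => ?_⟩ <;> fin_cases i <;> try fin_cases j
  all_goals simp [Rmat]; try positivity

theorem stmt14_general (n : ℕ)
    (a : Fin n → ℝ) (ha : ∀ i, 0 < a i)
    (c : Fin n → Bool)
    (M : Fin n → Matrix (Fin 2) (Fin 2) ℝ)
    (hM : ∀ i, M i = if c i then Lmat (a i) else Rmat (a i))
    (k : ℕ) (hk : k = (Finset.univ.filter fun i => c i = true).card)
    (P : Matrix (Fin 2) (Fin 2) ℝ) (hP : P = (List.ofFn M).prod) :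
    (∀ i j, 0 ≤ (-1 : ℝ) ^ k * P i j) ∧
    (0 < (-1 : ℝ) ^ k * P 0 0) ∧ (0 < (-1 : ℝ) ^ k * P 1 1) ∧
    Matrix.trace P ≠ 0 ∧ 0 < (-1 : ℝ) ^ k * Matrix.trace P := by
  set ε : Fin n → ℝ := fun i => if c i then -1 else 1
  have hprod_ε : ∏ i, ε i = (-1) ^ k := by
    rw [Finset.prod_ite, Finset.prod_const, Finset.prod_const, one_pow, mul_one, hk]
  have hsigned_mem : ∀ i, ε i • M i ∈ nonnegPosDiag (Fin 2) ℝ := fun i => by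
    cases hc : c i
    · simpa [ε, hM i, hc] using Rmat_mem_nonnegPosDiag (ha i)
    · simpa [ε, hM i, hc] using neg_Lmat_mem_nonnegPosDiag (ha i)
  have hmem : (-1 : ℝ) ^ k • P ∈ nonnegPosDiag (Fin 2) ℝ := by
    rw [hP, ← hprod_ε, ← List.prod_ofFn_smul]
    exact Submonoid.list_prod_mem _ (by simpa [List.mem_ofFn] using hsigned_mem)
  have htrace : 0 < (-1 : ℝ) ^ k * P.trace := by
    simpa [trace_smul] using trace_pos_of_mem_nonnegPosDiag hmem
  refine ⟨fun i j => by simpa using hmem.1 i j, by simpa using hmem.2 0, by simpa using hmem.2 1,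
    fun h => by simp [h] at htrace, htrace⟩

theorem stmt14 (n : ℕ) (hn : 1 ≤ n)
    (a : Fin n → ℝ) (ha : ∀ i, 0 < a i)
    (c : Fin n → Bool)
    (M : Fin n → Matrix (Fin 2) (Fin 2) ℝ)
    (hM : ∀ i, M i = if c i then Lmat (a i) else Rmat (a i))
    (k : ℕ) (hk : k = (Finset.univ.filter fun i => c i = true).card)
    (P : Matrix (Fin 2) (Fin 2) ℝ) (hP : P = (List.ofFn M).prod) :
    (∀ i j, 0 ≤ (-1 : ℝ) ^ k * P i j) ∧
    (0 < (-1 : ℝ) ^ k * P 0 0) ∧ (0 < (-1 : ℝ) ^ k * P 1 1) ∧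
    Matrix.trace P ≠ 0 ∧ 0 < (-1 : ℝ) ^ k * Matrix.trace P :=
  stmt14_general n a ha c M hM k hk P hP
end
end

section
/- Define in the 3×3 real matrices (with E_{ij} the matrix units): h₁ := E₁₁ + E₂₂, h₂ := E₂₂ + E₃₃, e₁⁺ := E₁₂, e₂⁺ := E₂₃, e₁⁻ := E₂₁, e₂⁻ := E₃₂, E := E₁₃, F := E₃₁, with parities |h₁| = |h₂| = |E| = |F| = 0 and |e₁^±| = |e₂^±| = 1. Let ψ be the linear map on the span of these eight matrices determined by ψ(e₁⁺) = e₂⁺, ψ(e₂⁺) = e₁⁺, ψ(e₁⁻) = −e₂⁻, ψ(e₂⁻) = −e₁⁻, ψ(h₁) = −h₂, ψ(h₂) = −h₁, ψ(E) = E, ψ(F) = F. Then: (i) the eight matrices are linearly independent and their span is closed under the superbracket [X,Y] := XY − (−1)^{|X||Y|}YX (X, Y homogeneous, ordinary matrix product); (ii) ψ∘ψ = id; (iii) for all homogeneous X, Y in the span, ψ([X,Y]) = [ψ(X), ψ(Y)] (where ψ preserves parity). Hence ψ is an involutive automorphism of the Lie superalgebra 𝔰𝔩(1|2). -/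
/- STATEMENT 15: the realization of 𝔰𝔩(1|2) ≅ 𝔬𝔰𝔭(2|2) by 3×3 matrices: the eight
generators are linearly independent, their span is closed under the superbracket,
and ψ is an involutive automorphism of the Lie superalgebra. -/

noncomputable section

/-- h₁ = E₁₁ + E₂₂ -/
def h₁ : Matrix (Fin 3) (Fin 3) ℝ := !![1, 0, 0; 0, 1, 0; 0, 0, 0]
/-- h₂ = E₂₂ + E₃₃ -/
def h₂ : Matrix (Fin 3) (Fin 3) ℝ := !![0, 0, 0; 0, 1, 0; 0, 0, 1]
/-- e₁⁺ = E₁₂ -/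
def e₁p : Matrix (Fin 3) (Fin 3) ℝ := !![0, 1, 0; 0, 0, 0; 0, 0, 0]
/-- e₂⁺ = E₂₃ -/
def e₂p : Matrix (Fin 3) (Fin 3) ℝ := !![0, 0, 0; 0, 0, 1; 0, 0, 0]
/-- e₁⁻ = E₂₁ -/
def e₁m : Matrix (Fin 3) (Fin 3) ℝ := !![0, 0, 0; 1, 0, 0; 0, 0, 0]
/-- e₂⁻ = E₃₂ -/
def e₂m : Matrix (Fin 3) (Fin 3) ℝ := !![0, 0, 0; 0, 0, 0; 0, 1, 0]
/-- E = E₁₃ -/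
def Emat : Matrix (Fin 3) (Fin 3) ℝ := !![0, 0, 1; 0, 0, 0; 0, 0, 0]
/-- F = E₃₁ -/
def Fmat : Matrix (Fin 3) (Fin 3) ℝ := !![0, 0, 0; 0, 0, 0; 1, 0, 0]

/-- The eight generators of 𝔰𝔩(1|2). -/
def gen : Fin 8 → Matrix (Fin 3) (Fin 3) ℝ :=
  ![h₁, h₂, e₁p, e₂p, e₁m, e₂m, Emat, Fmat]

/-- The even part: span of h₁, h₂, E, F. -/
def evenPart : Submodule ℝ (Matrix (Fin 3) (Fin 3) ℝ) :=
  Submodule.span ℝ {h₁, h₂, Emat, Fmat}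

/-- The odd part: span of e₁⁺, e₂⁺, e₁⁻, e₂⁻. -/
def oddPart : Submodule ℝ (Matrix (Fin 3) (Fin 3) ℝ) :=
  Submodule.span ℝ {e₁p, e₂p, e₁m, e₂m}

/-- 𝔰𝔩(1|2) as the span of the eight generators. -/
def sl12 : Submodule ℝ (Matrix (Fin 3) (Fin 3) ℝ) := evenPart ⊔ oddPart

/-! `sl12` is the kernel of the supertrace `str M = M₀₀ - M₁₁ + M₂₂`, which vanishes on
supercommutators of homogeneous matrices. The map `ψ` is minus a conjugate of the supertranspose,
so `ψ (X * Y) = -(-1)^{|X||Y|} ψ Y * ψ X` for homogeneous `X`, `Y`, and hence `ψ` carries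
supercommutators to supercommutators. -/

open Matrix

lemma mem_evenPart_iff {M : Matrix (Fin 3) (Fin 3) ℝ} :
    M ∈ evenPart ↔ ∃ a b c d : ℝ, M = !![a, 0, c; 0, a + b, 0; d, 0, b] := by
  simp only [evenPart, Submodule.mem_span_insert, Submodule.mem_span_singleton]
  constructor
  · rintro ⟨a, _, ⟨b, _, ⟨c, _, ⟨d, rfl⟩, rfl⟩, rfl⟩, rfl⟩
    refine ⟨a, b, c, d, ?_⟩
    ext i j; fin_cases i <;> fin_cases j <;> simp [h₁, h₂, Emat, Fmat]
  · rintro ⟨a, b, c, d, rfl⟩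
    refine ⟨a, _, ⟨b, _, ⟨c, _, ⟨d, rfl⟩, rfl⟩, rfl⟩, ?_⟩
    ext i j; fin_cases i <;> fin_cases j <;> simp [h₁, h₂, Emat, Fmat]

lemma mem_oddPart_iff {M : Matrix (Fin 3) (Fin 3) ℝ} :
    M ∈ oddPart ↔ ∃ a b c d : ℝ, M = !![0, a, 0; c, 0, b; 0, d, 0] := by
  simp only [oddPart, Submodule.mem_span_insert, Submodule.mem_span_singleton]
  constructor
  · rintro ⟨a, _, ⟨b, _, ⟨c, _, ⟨d, rfl⟩, rfl⟩, rfl⟩, rfl⟩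
    refine ⟨a, b, c, d, ?_⟩
    ext i j; fin_cases i <;> fin_cases j <;> simp [e₁p, e₂p, e₁m, e₂m]
  · rintro ⟨a, b, c, d, rfl⟩
    refine ⟨a, _, ⟨b, _, ⟨c, _, ⟨d, rfl⟩, rfl⟩, rfl⟩, ?_⟩
    ext i j; fin_cases i <;> fin_cases j <;> simp [e₁p, e₂p, e₁m, e₂m]

lemma sum_smul_gen (c : Fin 8 → ℝ) :
    ∑ i, c i • gen i = !![c 0, c 2, c 6; c 4, c 0 + c 1, c 3; c 7, c 5, c 1] := by
  ext i j
  fin_cases i <;> fin_cases j <;>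
    simp [Fin.sum_univ_eight, gen, h₁, h₂, e₁p, e₂p, e₁m, e₂m, Emat, Fmat]

lemma linearIndependent_gen : LinearIndependent ℝ gen := by
  rw [Fintype.linearIndependent_iff]
  intro c hc
  rw [sum_smul_gen, ← Matrix.ext_iff] at hc
  simp only [Fin.forall_fin_succ, Fin.isValue, of_apply, cons_val', cons_val_fin_one,
    cons_val_zero, cons_val_succ, Matrix.zero_apply, forall_const] at hc
  obtain ⟨⟨h0, h2, h6⟩, ⟨h4, -, h3⟩, h7, h5, h1⟩ := hc
  intro i
  fin_cases i <;> assumption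

def supertrace : Matrix (Fin 3) (Fin 3) ℝ →ₗ[ℝ] ℝ where
  toFun M := M 0 0 - M 1 1 + M 2 2
  map_add' M N := by simp only [Matrix.add_apply]; ring
  map_smul' c M := by simp only [Matrix.smul_apply, smul_eq_mul, RingHom.id_apply]; ring

lemma supertrace_apply (M : Matrix (Fin 3) (Fin 3) ℝ) :
    supertrace M = M 0 0 - M 1 1 + M 2 2 := rfl

lemma sl12_eq_ker_supertrace : sl12 = LinearMap.ker supertrace := by
  ext M
  rw [sl12, Submodule.mem_sup, LinearMap.mem_ker, supertrace_apply]
  simp only [mem_evenPart_iff, mem_oddPart_iff]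
  constructor
  · rintro ⟨_, ⟨a, b, c, d, rfl⟩, _, ⟨a', b', c', d', rfl⟩, rfl⟩
    simp
  · intro hM
    refine ⟨_, ⟨M 0 0, M 2 2, M 0 2, M 2 0, rfl⟩, _, ⟨M 0 1, M 1 2, M 1 0, M 2 1, rfl⟩,
      ?_⟩
    ext i j
    fin_cases i <;> fin_cases j <;> simp [show M 1 1 = M 0 0 + M 2 2 by linarith]

lemma supertrace_mul_comm_of_mem_evenPart {X : Matrix (Fin 3) (Fin 3) ℝ}
    (hX : X ∈ evenPart) (Y : Matrix (Fin 3) (Fin 3) ℝ) :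
    supertrace (X * Y) = supertrace (Y * X) := by
  obtain ⟨a, b, c, d, rfl⟩ := mem_evenPart_iff.mp hX
  simp only [supertrace_apply, mul_apply, Fin.sum_univ_three, of_apply, cons_val', cons_val_zero,
    cons_val_one, cons_val_two, cons_val_fin_one, tail_cons, vecHead]
  ring

lemma supertrace_mul_anticomm_of_mem_oddPart {X Y : Matrix (Fin 3) (Fin 3) ℝ}
    (hX : X ∈ oddPart) (hY : Y ∈ oddPart) : supertrace (X * Y) = -supertrace (Y * X) := by
  obtain ⟨a, b, c, d, rfl⟩ := mem_oddPart_iff.mp hX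
  obtain ⟨a', b', c', d', rfl⟩ := mem_oddPart_iff.mp hY
  simp only [supertrace_apply, mul_apply, Fin.sum_univ_three, of_apply, cons_val', cons_val_zero,
    cons_val_one, cons_val_two, cons_val_fin_one, tail_cons, vecHead]
  ring

lemma commutator_mem_sl12 {X : Matrix (Fin 3) (Fin 3) ℝ} (hX : X ∈ evenPart)
    (Y : Matrix (Fin 3) (Fin 3) ℝ) : X * Y - Y * X ∈ sl12 := by
  rw [sl12_eq_ker_supertrace, LinearMap.mem_ker, map_sub,
    supertrace_mul_comm_of_mem_evenPart hX, sub_self]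

lemma anticommutator_mem_sl12 {X Y : Matrix (Fin 3) (Fin 3) ℝ} (hX : X ∈ oddPart)
    (hY : Y ∈ oddPart) : X * Y + Y * X ∈ sl12 := by
  rw [sl12_eq_ker_supertrace, LinearMap.mem_ker, map_add,
    supertrace_mul_anticomm_of_mem_oddPart hX hY, neg_add_cancel]

/-- `ψ M = -D w Mˢᵗ w D⁻¹` with `w` the antidiagonal permutation matrix, `D = diag(1, 1, -1)`
and the supertranspose `(Mˢᵗ)ᵢⱼ = (-1)^{(|i|+|j|)|j|} Mⱼᵢ`. -/
def ψ : Matrix (Fin 3) (Fin 3) ℝ →ₗ[ℝ] Matrix (Fin 3) (Fin 3) ℝ where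
  toFun M := !![-M 2 2, M 1 2, M 0 2; -M 2 1, -M 1 1, M 0 1; M 2 0, -M 1 0, -M 0 0]
  map_add' M N := by ext i j; fin_cases i <;> fin_cases j <;> simp <;> ring
  map_smul' c M := by ext i j; fin_cases i <;> fin_cases j <;> simp

lemma ψ_apply (M : Matrix (Fin 3) (Fin 3) ℝ) :
    ψ M = !![-M 2 2, M 1 2, M 0 2; -M 2 1, -M 1 1, M 0 1; M 2 0, -M 1 0, -M 0 0] := rfl

lemma ψ_generators :
    ψ e₁p = e₂p ∧ ψ e₂p = e₁p ∧ ψ e₁m = -e₂m ∧ ψ e₂m = -e₁m ∧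
      ψ h₁ = -h₂ ∧ ψ h₂ = -h₁ ∧ ψ Emat = Emat ∧ ψ Fmat = Fmat := by
  simp [ψ_apply, h₁, h₂, e₁p, e₂p, e₁m, e₂m, Emat, Fmat]

lemma ψ_ψ (M : Matrix (Fin 3) (Fin 3) ℝ) : ψ (ψ M) = M := by
  simp [ψ_apply, ← eta_fin_three M]

lemma ψ_mem_evenPart {X : Matrix (Fin 3) (Fin 3) ℝ} (hX : X ∈ evenPart) :
    ψ X ∈ evenPart := by
  obtain ⟨a, b, c, d, rfl⟩ := mem_evenPart_iff.mp hX
  exact mem_evenPart_iff.mpr ⟨-b, -a, c, d, by simp [ψ_apply, add_comm]⟩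

lemma ψ_mem_oddPart {X : Matrix (Fin 3) (Fin 3) ℝ} (hX : X ∈ oddPart) : ψ X ∈ oddPart := by
  obtain ⟨a, b, c, d, rfl⟩ := mem_oddPart_iff.mp hX
  exact mem_oddPart_iff.mpr ⟨b, a, -d, -c, by simp [ψ_apply]⟩

lemma ψ_mul_of_mem_evenPart_left {X : Matrix (Fin 3) (Fin 3) ℝ} (hX : X ∈ evenPart)
    (Y : Matrix (Fin 3) (Fin 3) ℝ) : ψ (X * Y) = -(ψ Y * ψ X) := by
  obtain ⟨a, b, c, d, rfl⟩ := mem_evenPart_iff.mp hX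
  ext i j
  fin_cases i <;> fin_cases j <;>
    simp [ψ_apply, vecMul, dotProduct, Fin.sum_univ_three] <;> ring

lemma ψ_mul_of_mem_evenPart_right (X : Matrix (Fin 3) (Fin 3) ℝ) {Y : Matrix (Fin 3) (Fin 3) ℝ}
    (hY : Y ∈ evenPart) : ψ (X * Y) = -(ψ Y * ψ X) := by
  obtain ⟨a, b, c, d, rfl⟩ := mem_evenPart_iff.mp hY
  ext i j
  fin_cases i <;> fin_cases j <;> simp [ψ_apply, mul_apply, Fin.sum_univ_three] <;> ring

lemma ψ_mul_of_mem_oddPart {X Y : Matrix (Fin 3) (Fin 3) ℝ} (hX : X ∈ oddPart)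
    (hY : Y ∈ oddPart) : ψ (X * Y) = ψ Y * ψ X := by
  obtain ⟨a, b, c, d, rfl⟩ := mem_oddPart_iff.mp hX
  obtain ⟨a', b', c', d', rfl⟩ := mem_oddPart_iff.mp hY
  ext i j
  fin_cases i <;> fin_cases j <;> simp [ψ_apply] <;> ring

lemma ψ_commutator_of_mem_evenPart {X : Matrix (Fin 3) (Fin 3) ℝ} (hX : X ∈ evenPart)
    (Y : Matrix (Fin 3) (Fin 3) ℝ) : ψ (X * Y - Y * X) = ψ X * ψ Y - ψ Y * ψ X := by
  rw [map_sub, ψ_mul_of_mem_evenPart_left hX, ψ_mul_of_mem_evenPart_right Y hX, neg_sub_neg]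

lemma ψ_anticommutator_of_mem_oddPart {X Y : Matrix (Fin 3) (Fin 3) ℝ} (hX : X ∈ oddPart)
    (hY : Y ∈ oddPart) : ψ (X * Y + Y * X) = ψ X * ψ Y + ψ Y * ψ X := by
  rw [map_add, ψ_mul_of_mem_oddPart hX hY, ψ_mul_of_mem_oddPart hY hX, add_comm]

theorem stmt15 :
    -- (i) linear independence
    LinearIndependent ℝ gen ∧
    -- (i) closure of the span under the superbracket [X,Y] = XY − (−1)^{|X||Y|}YX
    (∀ X Y : Matrix (Fin 3) (Fin 3) ℝ,
      X ∈ evenPart → Y ∈ evenPart → X * Y - Y * X ∈ sl12) ∧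
    (∀ X Y : Matrix (Fin 3) (Fin 3) ℝ,
      X ∈ evenPart → Y ∈ oddPart → X * Y - Y * X ∈ sl12) ∧
    (∀ X Y : Matrix (Fin 3) (Fin 3) ℝ,
      X ∈ oddPart → Y ∈ evenPart → X * Y - Y * X ∈ sl12) ∧
    (∀ X Y : Matrix (Fin 3) (Fin 3) ℝ,
      X ∈ oddPart → Y ∈ oddPart → X * Y + Y * X ∈ sl12) ∧
    -- ψ: the parity-preserving linear map determined by the given generator values,
    -- which is an involution (ii) and respects the superbracket (iii)
    (∃ ψ : Matrix (Fin 3) (Fin 3) ℝ →ₗ[ℝ] Matrix (Fin 3) (Fin 3) ℝ,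
      ψ e₁p = e₂p ∧ ψ e₂p = e₁p ∧ ψ e₁m = -e₂m ∧ ψ e₂m = -e₁m ∧
      ψ h₁ = -h₂ ∧ ψ h₂ = -h₁ ∧ ψ Emat = Emat ∧ ψ Fmat = Fmat ∧
      (∀ X ∈ evenPart, ψ X ∈ evenPart) ∧ (∀ X ∈ oddPart, ψ X ∈ oddPart) ∧
      (∀ X ∈ sl12, ψ (ψ X) = X) ∧
      (∀ X Y : Matrix (Fin 3) (Fin 3) ℝ, X ∈ evenPart → Y ∈ evenPart →
        ψ (X * Y - Y * X) = ψ X * ψ Y - ψ Y * ψ X) ∧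
      (∀ X Y : Matrix (Fin 3) (Fin 3) ℝ, X ∈ evenPart → Y ∈ oddPart →
        ψ (X * Y - Y * X) = ψ X * ψ Y - ψ Y * ψ X) ∧
      (∀ X Y : Matrix (Fin 3) (Fin 3) ℝ, X ∈ oddPart → Y ∈ evenPart →
        ψ (X * Y - Y * X) = ψ X * ψ Y - ψ Y * ψ X) ∧
      (∀ X Y : Matrix (Fin 3) (Fin 3) ℝ, X ∈ oddPart → Y ∈ oddPart →
        ψ (X * Y + Y * X) = ψ X * ψ Y + ψ Y * ψ X)) := by
  obtain ⟨hψe₁p, hψe₂p, hψe₁m, hψe₂m, hψh₁, hψh₂, hψE, hψF⟩ := ψ_generators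
  refine ⟨linearIndependent_gen,
    fun X Y hX _ => commutator_mem_sl12 hX Y,
    fun X Y hX _ => commutator_mem_sl12 hX Y,
    fun X Y _ hY => by rw [← neg_sub]; exact neg_mem (commutator_mem_sl12 hY X),
    fun X Y hX hY => anticommutator_mem_sl12 hX hY,
    ψ, hψe₁p, hψe₂p, hψe₁m, hψe₂m, hψh₁, hψh₂, hψE, hψF,
    fun _ => ψ_mem_evenPart, fun _ => ψ_mem_oddPart, fun X _ => ψ_ψ X,
    fun X Y hX _ => ψ_commutator_of_mem_evenPart hX Y,
    fun X Y hX _ => ψ_commutator_of_mem_evenPart hX Y,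
    fun X Y _ hY => ?_,
    fun X Y hX hY => ψ_anticommutator_of_mem_oddPart hX hY⟩
  rw [← neg_sub, map_neg, ψ_commutator_of_mem_evenPart hY X, neg_sub]
end
end
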